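/- arXiv:1506.05260 — 6 statements merged into one kernel-verified Lean document; each statement's English description precedes it below -/
import Mathlib

section
/- The Jacobi matrix of the map E : ℝ^{r+1} → ℝ^{r+1} whose j-th coordinate function is the j-th elementary symmetric polynomial e_j(x_1,...,x_{r+1}) has determinant equal to the Vandermonde product ∏_{1 ≤ i < j ≤ r+1} (x_i - x_j) (up to sign convention on the ordering of factors). -/
/-!
Differentiating `e_{i+1}` in `x_j` gives `e_i` of the remaining variables, and dividing
`∏ₖ (1 + xₖ t)` by `1 + x_j t` expresses it as `∑ₖ (-x_j)ᵏ e_{i-k}(x)`. Hence the Jacobi matrix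
is the unitriangular Toeplitz matrix `(e_{i-k}(x))` times the transposed Vandermonde matrix of
`-x`, whose determinant is `∏_{i<j} (-x_j + x_i)`.
-/

open Finset

/-- The Jacobi matrix of the map `E : ℝ^(r+1) → ℝ^(r+1)` given by the elementary
symmetric polynomials: its `(i,j)` entry is `∂e_(i+1)/∂x_j = e_i(x₁,…,x̂_j,…,x_{r+1})`. -/
noncomputable def jacobiEsymm (r : ℕ) (x : Fin (r + 1) → ℝ) :
    Matrix (Fin (r + 1)) (Fin (r + 1)) ℝ :=
  fun i j => ∑ s ∈ Finset.powersetCard i.val (Finset.univ.erase j), ∏ k ∈ s, x k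

namespace Multiset

section CommSemiring

variable {R : Type*} [CommSemiring R]

theorem esymm_zero (s : Multiset R) : s.esymm 0 = 1 := by
  simp [esymm]

theorem esymm_cons_succ (a : R) (s : Multiset R) (n : ℕ) :
    (a ::ₘ s).esymm (n + 1) = s.esymm (n + 1) + a * s.esymm n := by
  simp [esymm, powersetCard_cons, map_map, sum_map_mul_left]

end CommSemiring

theorem esymm_eq_sum_esymm_cons {R : Type*} [CommRing R] (a : R) (s : Multiset R) (n : ℕ) :
    s.esymm n = ∑ k ∈ Finset.range (n + 1), (-a) ^ k * (a ::ₘ s).esymm (n - k) := by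
  induction n with
  | zero => simp [esymm_zero]
  | succ n ih =>
    rw [sum_range_succ', pow_zero, one_mul, Nat.sub_zero, esymm_cons_succ]
    simp only [Nat.succ_sub_succ, pow_succ, mul_comm _ (-a), mul_assoc, ← mul_sum, ← ih]
    ring

end Multiset

namespace Matrix

variable {R : Type*} [CommRing R]

def lowerToeplitz (n : ℕ) (c : ℕ → R) : Matrix (Fin n) (Fin n) R :=
  of fun i k => if k ≤ i then c (i - k) else 0

theorem det_lowerToeplitz (n : ℕ) (c : ℕ → R) : (lowerToeplitz n c).det = c 0 ^ n := by
  rw [det_of_isLowerTriangular]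
  · simp [lowerToeplitz]
  · intro i k hik
    simp [lowerToeplitz, not_le.2 (OrderDual.toDual_lt_toDual.1 hik)]

theorem lowerToeplitz_mul_vandermonde_transpose_apply {n : ℕ} (c : ℕ → R) (v : Fin n → R)
    (i j : Fin n) :
    (lowerToeplitz n c * (vandermonde v)ᵀ) i j =
      ∑ k ∈ Finset.range (i + 1), c (i - k) * v j ^ k := by
  have hrange : (Finset.range n).filter (· ≤ (i : ℕ)) = Finset.range (i + 1) := by
    ext k
    simp only [mem_filter, mem_range]
    omega
  simp only [mul_apply, lowerToeplitz, of_apply, transpose_apply, vandermonde_apply, ite_mul,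
    zero_mul, Fin.le_def]
  rw [Fin.sum_univ_eq_sum_range (fun k => if k ≤ (i : ℕ) then c (i - k) * v j ^ k else 0),
    ← sum_filter, hrange]

end Matrix

open Matrix

theorem jacobiEsymm_eq_lowerToeplitz_mul_vandermonde (r : ℕ) (x : Fin (r + 1) → ℝ) :
    jacobiEsymm r x = lowerToeplitz (r + 1) (univ.val.map x).esymm * (vandermonde (-x))ᵀ := by
  ext i j
  have hcons : x j ::ₘ (univ.erase j).val.map x = univ.val.map x := by
    rw [← Multiset.map_cons, ← insert_val_of_notMem (notMem_erase j univ),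
      insert_erase (mem_univ j)]
  rw [lowerToeplitz_mul_vandermonde_transpose_apply, jacobiEsymm, ← esymm_map_val,
    Multiset.esymm_eq_sum_esymm_cons (x j), hcons]
  exact sum_congr rfl fun k _ => mul_comm _ _

/-- The determinant of the Jacobi matrix of the elementary symmetric polynomial map is
the Vandermonde product `∏_{i<j} (x_i - x_j)`. -/
theorem det_jacobiEsymm (r : ℕ) (x : Fin (r + 1) → ℝ) :
    (jacobiEsymm r x).det = ∏ i : Fin (r + 1), ∏ j ∈ Finset.Ioi i, (x i - x j) := by
  rw [jacobiEsymm_eq_lowerToeplitz_mul_vandermonde, det_mul, det_transpose, det_lowerToeplitz,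
    Multiset.esymm_zero, one_pow, one_mul, det_vandermonde]
  simp only [Pi.neg_apply, neg_sub_neg]
end

section
/- The map F : D² → ℝ⁵ defined by F(t_2, x) = (-2x t_2, t_2, -3x², -t_2 x², 2x(t_2² - 1)) on the closed unit disc D² = {(t_2,x) : t_2² + x² ≤ 1} is injective. -/
/-- The map `F(t₂,x) = (-2xt₂, t₂, -3x², -t₂x², 2x(t₂²-1))`. -/
noncomputable def Fmap (p : ℝ × ℝ) : Fin 5 → ℝ :=
  ![-2 * p.2 * p.1, p.1, -3 * p.2 ^ 2, -p.1 * p.2 ^ 2, 2 * p.2 * (p.1 ^ 2 - 1)]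

theorem Fmap_injective : Function.Injective Fmap := by
  rintro ⟨t, x⟩ ⟨t', x'⟩ h
  have ht : t = t' := congrFun h 1
  subst ht
  have h0 : -2 * x * t = -2 * x' * t := congrFun h 0
  have h4 : 2 * x * (t ^ 2 - 1) = 2 * x' * (t ^ 2 - 1) := congrFun h 4
  -- `x = t · (x t) - x (t² - 1)` is read off the first and last coordinates once `t` is known.
  have hx : x = x' := by linear_combination (-t / 2) * h0 - (1 / 2) * h4
  rw [hx]

/-- `F` is injective on the closed unit disc. -/
theorem Fmap_injOn : Set.InjOn Fmap {p : ℝ × ℝ | p.1 ^ 2 + p.2 ^ 2 ≤ 1} :=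
  Fmap_injective.injOn
end

section
/- The map F(t_2, x) = (-2x t_2, t_2, -3x², -t_2 x², 2x(t_2² - 1)) is a smooth embedding of the closed unit disc D² into ℝ⁵, i.e. it is injective and its differential has rank 2 at every point of D². -/
/-- The `5 × 2` matrix of partial derivatives of `F` at `(t₂, x)`. -/
noncomputable def FmapJacobi (t₂ x : ℝ) : Matrix (Fin 5) (Fin 2) ℝ :=
  !![-2 * x, -2 * t₂;
     1, 0;
     0, -6 * x;
     -x ^ 2, -2 * t₂ * x;
     4 * x * t₂, 2 * (t₂ ^ 2 - 1)]

/-!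
`F` has the polynomial left inverse `G(y) = (y₁, -(y₄ + y₁ y₀) / 2)`, since
`F₄ + t₂ F₀ = -2x`. Hence `F` is injective, and by the chain rule `DG(F p) · DF(p) = 1`,
so `DF(p)` has full column rank `2` everywhere.
-/

theorem Matrix.rank_eq_card_width_of_mul_eq_one {R m n : Type*} [CommSemiring R]
    [StrongRankCondition R] [Fintype m] [Fintype n] [DecidableEq n]
    {A : Matrix m n R} {L : Matrix n m R} (h : L * A = 1) :
    A.rank = Fintype.card n :=
  le_antisymm A.rank_le_card_width <| by
    simpa only [h, Matrix.rank_one] using Matrix.rank_mul_le_right L A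

noncomputable def FmapLeftInv (y : Fin 5 → ℝ) : ℝ × ℝ :=
  (y 1, -(y 4 + y 1 * y 0) / 2)

theorem FmapLeftInv_Fmap : Function.LeftInverse FmapLeftInv Fmap := by
  rintro ⟨t₂, x⟩
  simp only [FmapLeftInv, Fmap, Prod.mk.injEq]
  constructor
  · rfl
  · simp only [Matrix.cons_val]
    ring

/-- The Jacobian of `FmapLeftInv` at `Fmap (t₂, x)`. -/
noncomputable def FmapLeftInvJacobi (t₂ x : ℝ) : Matrix (Fin 2) (Fin 5) ℝ :=
  !![0, 1, 0, 0, 0;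
     -t₂ / 2, x * t₂, 0, 0, -1 / 2]

theorem FmapLeftInvJacobi_mul_FmapJacobi (t₂ x : ℝ) :
    FmapLeftInvJacobi t₂ x * FmapJacobi t₂ x = 1 := by
  ext i j
  fin_cases i <;> fin_cases j <;>
    simp [FmapLeftInvJacobi, FmapJacobi, Matrix.mul_apply, Fin.sum_univ_five] <;> ring

theorem FmapJacobi_rank (t₂ x : ℝ) : (FmapJacobi t₂ x).rank = 2 := by
  simpa using Matrix.rank_eq_card_width_of_mul_eq_one (FmapLeftInvJacobi_mul_FmapJacobi t₂ x)

/-- `F` is a smooth embedding of the closed unit disc into `ℝ⁵`: it is injective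
on the disc and its differential has rank `2` at every point of the disc. -/
theorem Fmap_embedding :
    Set.InjOn Fmap {p : ℝ × ℝ | p.1 ^ 2 + p.2 ^ 2 ≤ 1} ∧
    ∀ p : ℝ × ℝ, p.1 ^ 2 + p.2 ^ 2 ≤ 1 → (FmapJacobi p.1 p.2).rank = 2 :=
  ⟨Fmap_injective.injOn, fun p _ => FmapJacobi_rank p.1 p.2⟩
end

section
/- For every point (t_2, x) in the closed unit disc, the two partial-derivative vectors ∂F/∂t_2, ∂F/∂x of F(t_2,x) = (-2x t_2, t_2, -3x², -t_2 x², 2x(t_2² - 1)) together with the three vectors v_1 = (0,0,-1,t_2,2x), v_2 = (3 - 3t_2² - 6x², -3x³, x t_2, 3x, -t_2), v_3 = (-4x, -7x², t_2, 1, 0) form a basis of ℝ⁵. -/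
/-!
Grouped by powers of `x²`, the determinant of the five vectors is
`c₀(t₂²) + c₁(t₂²) x² + c₂(t₂²) x⁴ - c₃(t₂²) x⁶ - 360 x⁸` with `c₀, c₁, c₂ < 0`
(`c₂` has negative discriminant) and `c₃ > 0` on `t₂² ≥ 0`, so it never vanishes.
-/

theorem Matrix.span_rows_eq_top_of_det_ne_zero {K n : Type*} [Field K] [Fintype n] [DecidableEq n]
    {A : Matrix n n K} (hA : A.det ≠ 0) : Submodule.span K (Set.range fun i ↦ A i) = ⊤ :=
  (linearIndependent_rows_of_det_ne_zero hA).span_eq_top_of_card_eq_finrank' (by simp)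

def frameMatrix (t₂ x : ℝ) : Matrix (Fin 5) (Fin 5) ℝ :=
  !![-2 * x, 1, 0, -x ^ 2, 4 * x * t₂;
    -2 * t₂, 0, -6 * x, -2 * t₂ * x, 2 * (t₂ ^ 2 - 1);
    0, 0, -1, t₂, 2 * x;
    3 - 3 * t₂ ^ 2 - 6 * x ^ 2, -3 * x ^ 3, x * t₂, 3 * x, -t₂;
    -4 * x, -7 * x ^ 2, t₂, 1, 0]

theorem det_frameMatrix (t₂ x : ℝ) :
    (frameMatrix t₂ x).det =
      (-6 + 4 * t₂ ^ 2 + 4 * t₂ ^ 4 - 6 * t₂ ^ 6) + x ^ 2 * (-48 + 24 * t₂ ^ 2 - 16 * t₂ ^ 4)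
        + x ^ 4 * (-102 + 394 * t₂ ^ 2 - 646 * t₂ ^ 4) - x ^ 6 * (240 + 1136 * t₂ ^ 2)
        - 360 * x ^ 8 := by
  simp [frameMatrix, Matrix.det_succ_row_zero, Fin.sum_univ_succ, Fin.succAbove]
  ring

theorem det_frameMatrix_neg (t₂ x : ℝ) : (frameMatrix t₂ x).det < 0 := by
  have h₀ : -6 + 4 * t₂ ^ 2 + 4 * t₂ ^ 4 - 6 * t₂ ^ 6 < 0 := by
    nlinarith [sq_nonneg t₂, sq_nonneg (t₂ ^ 2 - 1),
      mul_nonneg (sq_nonneg t₂) (sq_nonneg (t₂ ^ 2 - 1))]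
  have h₁ : -48 + 24 * t₂ ^ 2 - 16 * t₂ ^ 4 < 0 := by nlinarith [sq_nonneg (t₂ ^ 2 - 1)]
  have h₂ : -102 + 394 * t₂ ^ 2 - 646 * t₂ ^ 4 < 0 := by nlinarith [sq_nonneg (t₂ ^ 2 - 197 / 646)]
  have h₃ : 0 ≤ 240 + 1136 * t₂ ^ 2 := by positivity
  rw [det_frameMatrix]
  nlinarith [mul_nonpos_of_nonneg_of_nonpos (by positivity : (0 : ℝ) ≤ x ^ 2) h₁.le,
    mul_nonpos_of_nonneg_of_nonpos (by positivity : (0 : ℝ) ≤ x ^ 4) h₂.le,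
    mul_nonneg (by positivity : (0 : ℝ) ≤ x ^ 6) h₃, (by positivity : (0 : ℝ) ≤ x ^ 8)]

theorem partials_and_framing_basis_general (t₂ x : ℝ) :
    LinearIndependent ℝ
      ![(![-2 * x, 1, 0, -x ^ 2, 4 * x * t₂] : Fin 5 → ℝ),
        ![-2 * t₂, 0, -6 * x, -2 * t₂ * x, 2 * (t₂ ^ 2 - 1)],
        ![0, 0, -1, t₂, 2 * x],
        ![3 - 3 * t₂ ^ 2 - 6 * x ^ 2, -3 * x ^ 3, x * t₂, 3 * x, -t₂],
        ![-4 * x, -7 * x ^ 2, t₂, 1, 0]] ∧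
    Submodule.span ℝ
      (Set.range ![(![-2 * x, 1, 0, -x ^ 2, 4 * x * t₂] : Fin 5 → ℝ),
        ![-2 * t₂, 0, -6 * x, -2 * t₂ * x, 2 * (t₂ ^ 2 - 1)],
        ![0, 0, -1, t₂, 2 * x],
        ![3 - 3 * t₂ ^ 2 - 6 * x ^ 2, -3 * x ^ 3, x * t₂, 3 * x, -t₂],
        ![-4 * x, -7 * x ^ 2, t₂, 1, 0]]) = ⊤ := by
  have hdet := (det_frameMatrix_neg t₂ x).ne
  exact ⟨Matrix.linearIndependent_rows_of_det_ne_zero hdet,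
    Matrix.span_rows_eq_top_of_det_ne_zero hdet⟩

/-- For every point `(t₂,x)` of the closed unit disc, the two partial derivative
vectors `∂F/∂t₂`, `∂F/∂x` of `F(t₂,x) = (-2xt₂, t₂, -3x², -t₂x², 2x(t₂²-1))`
together with the framing vectors `v₁, v₂, v₃` form a basis of `ℝ⁵`. -/
theorem partials_and_framing_basis (t₂ x : ℝ) (h : t₂ ^ 2 + x ^ 2 ≤ 1) :
    LinearIndependent ℝ
      ![(![-2 * x, 1, 0, -x ^ 2, 4 * x * t₂] : Fin 5 → ℝ),
        ![-2 * t₂, 0, -6 * x, -2 * t₂ * x, 2 * (t₂ ^ 2 - 1)],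
        ![0, 0, -1, t₂, 2 * x],
        ![3 - 3 * t₂ ^ 2 - 6 * x ^ 2, -3 * x ^ 3, x * t₂, 3 * x, -t₂],
        ![-4 * x, -7 * x ^ 2, t₂, 1, 0]] ∧
    Submodule.span ℝ
      (Set.range ![(![-2 * x, 1, 0, -x ^ 2, 4 * x * t₂] : Fin 5 → ℝ),
        ![-2 * t₂, 0, -6 * x, -2 * t₂ * x, 2 * (t₂ ^ 2 - 1)],
        ![0, 0, -1, t₂, 2 * x],
        ![3 - 3 * t₂ ^ 2 - 6 * x ^ 2, -3 * x ^ 3, x * t₂, 3 * x, -t₂],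
        ![-4 * x, -7 * x ^ 2, t₂, 1, 0]]) = ⊤ :=
  partials_and_framing_basis_general t₂ x
end

section
/- If σ_2 maps r+1 = 3 pairwise distinct points (more generally, if the prim normal form σ_r : ℝ^{2r} → ℝ^{2r+1} maps r+1 pairwise distinct points) to a common point q = (t_1,...,t_{2r-1}, z_1, z_2), then z_1 = t_1 = ... = t_r = 0. That is, the closure of the set of (r+1)-tuple points of σ_r is contained in the r-dimensional linear subspace {z_1 = t_1 = ... = t_r = 0} of ℝ^{2r+1}. -/
/-! The first coordinate `z₁` of `σ_r(t, x)` is `t₁x + ⋯ + t_r xʳ`. Points with the same image share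
`t`, so `r + 1` distinct preimages of `q` have distinct `x`, and each `x` is a root of
`t₁X + ⋯ + t_r Xʳ - z₁`. A polynomial of degree at most `r` with `r + 1` roots vanishes, so all its
coefficients `-z₁, t₁, …, t_r` are zero. -/

open Finset Polynomial

/-- The Morin prim normal form `σ_r : ℝ^{2r} → ℝ^{2r+1}`. A point of the source is
`(t, x)` with `t = (t₁,…,t_{2r-1})` (zero-indexed: `t ⟨k⟩ = t_{k+1}`); its image is
`(t, z₁, z₂)` with `z₁ = t₁x + ⋯ + t_r x^r` and
`z₂ = t_{r+1}x + ⋯ + t_{2r-1}x^{r-1} + x^{r+1}`. -/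
noncomputable def sigmaR (r : ℕ) (p : (Fin (2 * r - 1) → ℝ) × ℝ) :
    (Fin (2 * r - 1) → ℝ) × ℝ × ℝ :=
  (p.1,
   ∑ k ∈ Finset.range r, (if h : k < 2 * r - 1 then p.1 ⟨k, h⟩ else 0) * p.2 ^ (k + 1),
   (∑ k ∈ Finset.range (r - 1),
      (if h : r + k < 2 * r - 1 then p.1 ⟨r + k, h⟩ else 0) * p.2 ^ (k + 1)) + p.2 ^ (r + 1))

theorem Function.Injective.snd_comp_of_fst_eq {ι α β : Type*} {p : ι → α × β}
    (hp : Function.Injective p) {a : α} (hfst : ∀ i, (p i).1 = a) :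
    Function.Injective (Prod.snd ∘ p) :=
  fun i j h => hp (Prod.ext ((hfst i).trans (hfst j).symm) h)

section
variable {R : Type*} [CommRing R]

theorem natDegree_sum_C_mul_X_pow_succ_sub_C_le (n : ℕ) (a : ℕ → R) (c : R) :
    (∑ k ∈ range n, C (a k) * X ^ (k + 1) - C c).natDegree ≤ n := by
  refine (natDegree_sub_le _ _).trans (max_le ?_ ((natDegree_C c).le.trans (Nat.zero_le n)))
  refine natDegree_sum_le_of_forall_le _ _ fun k hk => ?_
  exact (natDegree_C_mul_X_pow_le _ _).trans (mem_range.mp hk)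

theorem coeff_zero_sum_C_mul_X_pow_succ_sub_C (n : ℕ) (a : ℕ → R) (c : R) :
    (∑ k ∈ range n, C (a k) * X ^ (k + 1) - C c).coeff 0 = -c := by
  simp

theorem coeff_succ_sum_C_mul_X_pow_succ_sub_C {n k : ℕ} (hk : k < n) (a : ℕ → R) (c : R) :
    (∑ k ∈ range n, C (a k) * X ^ (k + 1) - C c).coeff (k + 1) = a k := by
  simp [hk]

theorem eq_zero_of_sum_mul_pow_succ_eq [IsDomain R] {n : ℕ} (a : ℕ → R) (c : R)
    (x : Fin (n + 1) → R) (hx : Function.Injective x)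
    (h : ∀ j, ∑ k ∈ range n, a k * x j ^ (k + 1) = c) :
    c = 0 ∧ ∀ k < n, a k = 0 := by
  have hQ : ∑ k ∈ range n, C (a k) * X ^ (k + 1) - C c = 0 := by
    refine eq_zero_of_natDegree_lt_card_of_eval_eq_zero _ hx (fun j => ?_) ?_
    · simp [eval_finsetSum, h j]
    · simpa using Nat.lt_succ_of_le (natDegree_sum_C_mul_X_pow_succ_sub_C_le n a c)
  refine ⟨neg_eq_zero.mp ?_, fun k hk => ?_⟩
  · rw [← coeff_zero_sum_C_mul_X_pow_succ_sub_C n a c, hQ, coeff_zero]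
  · rw [← coeff_succ_sum_C_mul_X_pow_succ_sub_C hk a c, hQ, coeff_zero]

end

theorem tuple_points_in_subspace_general (r : ℕ)
    (q : (Fin (2 * r - 1) → ℝ) × ℝ × ℝ)
    (p : Fin (r + 1) → (Fin (2 * r - 1) → ℝ) × ℝ)
    (hp : Function.Injective p)
    (hq : ∀ j, sigmaR r (p j) = q) :
    q.2.1 = 0 ∧ ∀ k : Fin (2 * r - 1), (k : ℕ) < r → q.1 k = 0 := by
  have hfst (j : Fin (r + 1)) : (p j).1 = q.1 := congrArg Prod.fst (hq j)
  have hz₁ (j : Fin (r + 1)) : ∑ k ∈ range r,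
      (if h : k < 2 * r - 1 then q.1 ⟨k, h⟩ else 0) * (p j).2 ^ (k + 1) = q.2.1 := by
    rw [← hfst j]
    exact congrArg (fun v => v.2.1) (hq j)
  obtain ⟨hz₁_eq_zero, ht_eq_zero⟩ :=
    eq_zero_of_sum_mul_pow_succ_eq _ _ _ (hp.snd_comp_of_fst_eq hfst) hz₁
  exact ⟨hz₁_eq_zero, fun k hk => by simpa using ht_eq_zero k hk⟩

/-- If `σ_r` maps `r+1` pairwise distinct points to a common point
`q = (t₁,…,t_{2r-1}, z₁, z₂)`, then `z₁ = t₁ = ⋯ = t_r = 0`: the closure of the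
set of `(r+1)`-tuple points of `σ_r` lies in the subspace `{z₁ = t₁ = ⋯ = t_r = 0}`. -/
theorem tuple_points_in_subspace (r : ℕ) (hr : 1 ≤ r)
    (q : (Fin (2 * r - 1) → ℝ) × ℝ × ℝ)
    (p : Fin (r + 1) → (Fin (2 * r - 1) → ℝ) × ℝ)
    (hp : Function.Injective p)
    (hq : ∀ j, sigmaR r (p j) = q) :
    q.2.1 = 0 ∧ ∀ k : Fin (2 * r - 1), (k : ℕ) < r → q.1 k = 0 :=
  tuple_points_in_subspace_general r q p hp hq
end

section
/- Under the identification of (t_{r+1},...,t_{2r-1}, z_2) with the monic polynomial P(x) = x^{r+1} + t_{2r-1} x^{r-1} + ... + t_{r+1} x - z_2 (which has zero coefficient for x^r), the point (0,...,0, t_{r+1},...,t_{2r-1}, 0, z_2) lies in the closure of the set of (r+1)-tuple points of σ_r if and only if all roots of P are real. -/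
open Finset Polynomial

/-- The set of `(r+1)`-tuple points of `σ_r`: points of the target with exactly
`r+1` distinct preimages. -/
noncomputable def tuplePoints (r : ℕ) : Set ((Fin (2 * r - 1) → ℝ) × ℝ × ℝ) :=
  {q | (sigmaR r ⁻¹' {q}).ncard = r + 1}

/-- The monic polynomial `P(x) = x^{r+1} + t_{2r-1}x^{r-1} + ⋯ + t_{r+1}x - z₂`
associated to the point `(0,…,0,t_{r+1},…,t_{2r-1},0,z₂)`. -/
noncomputable def assocPoly (r : ℕ) (t : Fin (2 * r - 1) → ℝ) (z₂ : ℝ) : Polynomial ℝ :=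
  X ^ (r + 1) +
    (∑ k ∈ Finset.range (r - 1),
      C (if h : r + k < 2 * r - 1 then t ⟨r + k, h⟩ else 0) * X ^ (k + 1)) - C z₂

/-! The fibre of `σ_r` over `(t, z₁, z)` lies in `{t} × {real roots of P}`, and equals it when
`z₁ = t₁ = ⋯ = t_r = 0`. Since `deg P = r + 1`, at a tuple point `P` has `r + 1` distinct real
roots, so it splits; and splitting of a monic real `P` of degree `d` is the closed condition
`|Im w| ^ d ≤ ‖P(w)‖` for all `w : ℂ`, so it persists in the closure. Conversely, if `P` has real
roots `a₀ ≤ ⋯ ≤ a_r` (summing to `0`, as `P` has no `x^r` term) and `d` is strictly increasing with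
sum `0`, then the roots `aᵢ + ε dᵢ`, `ε > 0`, are distinct, still sum to `0`, and give tuple points
converging to `(t, 0, z)`. -/

namespace Polynomial

theorem Monic.splits_iff_abs_im_pow_le_norm_eval {P : ℝ[X]} (hP : P.Monic) :
    P.Splits ↔ ∀ z : ℂ, |z.im| ^ P.natDegree ≤ ‖(P.map (algebraMap ℝ ℂ)).eval z‖ := by
  constructor
  · intro hs z
    rw [(hs.map _).eval_eq_prod_roots_of_monic (hP.map _),
      hs.roots_map_of_injective (algebraMap ℝ ℂ).injective, Multiset.map_map,
      ← splits_iff_card_roots.1 hs]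
    calc |z.im| ^ Multiset.card P.roots = (P.roots.map fun _ => |z.im|).prod := by
          rw [Multiset.map_const', Multiset.prod_replicate]
      _ ≤ (P.roots.map fun a : ℝ => ‖z - a‖).prod :=
          Multiset.prod_map_le_prod_map₀ _ _ (fun _ _ => abs_nonneg _) fun a _ => by
            simpa using Complex.abs_im_le_norm (z - a)
      _ = ‖(P.roots.map ((z - ·) ∘ algebraMap ℝ ℂ)).prod‖ := by
          rw [← normHom_apply, map_multiset_prod, Multiset.map_map]
          rfl
  · intro h
    refine (IsAlgClosed.splits _).of_splits_map_of_injective (algebraMap ℝ ℂ).injective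
      fun w hw => ⟨w.re, Complex.ext rfl ?_⟩
    have hw0 : (P.map (algebraMap ℝ ℂ)).eval w = 0 := (mem_roots (hP.map _).ne_zero).1 hw
    have him : |w.im| ^ P.natDegree = 0 :=
      le_antisymm (by simpa [hw0] using h w) (by positivity)
    simpa [eq_comm] using eq_zero_of_pow_eq_zero him

theorem exists_monotone_prod_X_sub_C_eq {R : Type*} [CommRing R] [IsDomain R]
    [LinearOrder R] {P : R[X]} (hP : P.Monic) (hs : P.Splits) {n : ℕ} (hn : P.natDegree = n) :
    ∃ v : Fin n → R, Monotone v ∧ ∏ i, (X - C (v i)) = P := by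
  set L := P.roots.sort (· ≤ ·)
  have hL : L.length = n := by rw [Multiset.length_sort, splits_iff_card_roots.1 hs, hn]
  refine ⟨fun i => L.get (i.cast hL.symm),
    fun i j hij => (Multiset.pairwise_sort _ _).rel_get_of_le hij, ?_⟩
  calc ∏ i : Fin n, (X - C (L.get (i.cast hL.symm)))
      = ∏ i : Fin L.length, (X - C L[i.1]) :=
        Fintype.prod_equiv (finCongr hL.symm) _ _ fun _ => rfl
    _ = (P.roots.map (X - C ·)).prod := by
        rw [Fin.prod_univ_fun_getElem L (X - C ·), ← Multiset.prod_coe, ← Multiset.map_coe,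
          Multiset.sort_eq]
    _ = P := (hs.eq_prod_roots_of_monic hP).symm

section Continuity

variable {R α ι : Type*} [CommRing R] [TopologicalSpace R] [IsTopologicalRing R]
  [TopologicalSpace α]

theorem continuous_coeff_prod (s : Finset ι) {p : ι → α → R[X]}
    (hp : ∀ i ∈ s, ∀ k, Continuous fun x => (p i x).coeff k) (k : ℕ) :
    Continuous fun x => (∏ i ∈ s, p i x).coeff k := by
  have hprod := Finset.prod_induction p (fun F => ∀ k, Continuous fun x => (F x).coeff k)
    (fun F G hF hG k => by
      simpa only [Pi.mul_apply, coeff_mul] using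
        continuous_finsetSum _ fun _ _ => (hF _).mul (hG _))
    (fun k => by simpa only [Pi.one_apply] using continuous_const) hp
  simpa only [Finset.prod_apply] using hprod k

theorem continuous_coeff_X_sub_C {f : α → R} (hf : Continuous f) (k : ℕ) :
    Continuous fun x => (X - C (f x)).coeff k := by
  simp only [coeff_sub, coeff_X, coeff_C]
  split_ifs <;> fun_prop

end Continuity

end Polynomial

theorem exists_strictMono_sum_eq_zero (n : ℕ) :
    ∃ d : Fin (n + 1) → ℝ, StrictMono d ∧ ∑ i, d i = 0 := by
  refine ⟨fun i => i - (∑ j : Fin (n + 1), (j : ℝ)) / (n + 1), fun i j hij => ?_, ?_⟩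
  · simpa using (Nat.cast_lt (α := ℝ)).2 hij
  · rw [Finset.sum_sub_distrib, Finset.sum_const, Finset.card_univ, Fintype.card_fin,
      nsmul_eq_mul]
    field_simp
    push_cast
    ring

section assocPoly

variable {r : ℕ}

theorem degree_assocPoly_sub_X_pow_lt (t : Fin (2 * r - 1) → ℝ) (z : ℝ) :
    (assocPoly r t z - X ^ (r + 1)).degree < ↑(r + 1) := by
  rw [assocPoly, add_sub_assoc, add_sub_cancel_left]
  refine (degree_sub_le _ _).trans_lt
    (max_lt ?_ (degree_C_le.trans_lt (by exact_mod_cast r.succ_pos)))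
  refine (degree_sum_le _ _).trans_lt
    ((Finset.sup_lt_iff (WithBot.bot_lt_coe _)).2 fun k hk => ?_)
  refine (degree_C_mul_X_pow_le _ _).trans_lt ?_
  have := Finset.mem_range.1 hk
  exact_mod_cast (by omega : k + 1 < r + 1)

theorem monic_assocPoly (t : Fin (2 * r - 1) → ℝ) (z : ℝ) : (assocPoly r t z).Monic := by
  simpa using monic_X_pow_add (degree_assocPoly_sub_X_pow_lt t z)

theorem natDegree_assocPoly (t : Fin (2 * r - 1) → ℝ) (z : ℝ) :
    (assocPoly r t z).natDegree = r + 1 := by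
  have h := natDegree_add_eq_left_of_degree_lt
    ((degree_assocPoly_sub_X_pow_lt t z).trans_eq (degree_X_pow (r + 1)).symm)
  rwa [add_sub_cancel, natDegree_X_pow] at h

theorem coeff_assocPoly_zero (t : Fin (2 * r - 1) → ℝ) (z : ℝ) :
    (assocPoly r t z).coeff 0 = -z := by
  simp [assocPoly, coeff_X_pow]

theorem coeff_assocPoly_self (hr : 1 ≤ r) (t : Fin (2 * r - 1) → ℝ) (z : ℝ) :
    (assocPoly r t z).coeff r = 0 := by
  simp only [assocPoly, coeff_sub, coeff_add, coeff_X_pow, finsetSum_coeff, coeff_C_mul,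
    coeff_C, if_neg (show r ≠ r + 1 by omega), if_neg (show r ≠ 0 by omega)]
  rw [Finset.sum_eq_zero fun k hk => by
    rw [if_neg (by have := Finset.mem_range.1 hk; omega), mul_zero]]
  ring

theorem coeff_assocPoly_succ (t : Fin (2 * r - 1) → ℝ) (z : ℝ) {k : ℕ} (hk : k < r - 1) :
    (assocPoly r t z).coeff (k + 1) = t ⟨r + k, by omega⟩ := by
  simp only [assocPoly, coeff_sub, coeff_add, coeff_X_pow, finsetSum_coeff, coeff_C_mul,
    coeff_C, if_neg (show k + 1 ≠ r + 1 by omega), if_neg (show k + 1 ≠ 0 by omega)]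
  rw [Finset.sum_eq_single k (fun j _ hjk => by rw [if_neg (by omega), mul_zero])
    (fun h => absurd (Finset.mem_range.2 hk) h), if_pos rfl, dif_pos (by omega)]
  ring

theorem eval_assocPoly (t : Fin (2 * r - 1) → ℝ) (x z : ℝ) :
    (assocPoly r t z).eval x = (sigmaR r (t, x)).2.2 - z := by
  simp only [assocPoly, sigmaR, eval_sub, eval_add, eval_pow, eval_X, eval_finsetSum, eval_mul,
    eval_C, dite_mul, zero_mul, sub_left_inj]
  ring

end assocPoly

section sigmaR

variable {r : ℕ} {t : Fin (2 * r - 1) → ℝ}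

theorem sigmaR_snd_fst_eq_zero (ht : ∀ k : Fin (2 * r - 1), (k : ℕ) < r → t k = 0) (x : ℝ) :
    (sigmaR r (t, x)).2.1 = 0 :=
  Finset.sum_eq_zero (s := Finset.range r) fun k hk => by
    rw [dif_pos (by have := Finset.mem_range.1 hk; omega)]
    exact mul_eq_zero_of_left (ht _ (Finset.mem_range.1 hk)) _

theorem sigmaR_eq_iff (ht : ∀ k : Fin (2 * r - 1), (k : ℕ) < r → t k = 0)
    {p : (Fin (2 * r - 1) → ℝ) × ℝ} {z : ℝ} :
    sigmaR r p = (t, 0, z) ↔ p.1 = t ∧ (assocPoly r t z).IsRoot p.2 := by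
  obtain ⟨t', x⟩ := p
  rw [IsRoot, eval_assocPoly, sub_eq_zero]
  constructor
  · intro h
    obtain rfl : t' = t := congrArg Prod.fst h
    exact ⟨rfl, congrArg (·.2.2) h⟩
  · rintro ⟨rfl, hz⟩
    exact Prod.ext rfl (Prod.ext (sigmaR_snd_fst_eq_zero ht x) hz)

theorem splits_of_mem_tuplePoints {q : (Fin (2 * r - 1) → ℝ) × ℝ × ℝ}
    (hq : q ∈ tuplePoints r) : (assocPoly r q.1 q.2.2).Splits := by
  set P := assocPoly r q.1 q.2.2
  have hfst : ∀ p ∈ sigmaR r ⁻¹' {q}, p.1 = q.1 := fun p hp => congrArg Prod.fst hp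
  have hroot : ∀ p ∈ sigmaR r ⁻¹' {q}, p.2 ∈ (P.roots.toFinset : Set ℝ) := by
    intro p hp
    rw [Finset.mem_coe, Multiset.mem_toFinset, mem_roots (monic_assocPoly _ _).ne_zero, IsRoot,
      eval_assocPoly, ← hfst p hp, ← hp]
    exact sub_self _
  have hcard : r + 1 ≤ Multiset.card P.roots :=
    calc r + 1 = (sigmaR r ⁻¹' {q}).ncard := hq.symm
      _ ≤ (P.roots.toFinset : Set ℝ).ncard :=
          Set.ncard_le_ncard_of_injOn Prod.snd hroot fun p hp p' hp' h =>
            Prod.ext ((hfst p hp).trans (hfst p' hp').symm) h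
      _ ≤ Multiset.card P.roots := by
          rw [Set.ncard_coe_finset]; exact Multiset.toFinset_card_le _
  rw [splits_iff_card_roots, natDegree_assocPoly]
  exact le_antisymm ((card_roots' P).trans_eq (natDegree_assocPoly _ _)) hcard

theorem isClosed_setOf_splits_assocPoly :
    IsClosed {q : (Fin (2 * r - 1) → ℝ) × ℝ × ℝ | (assocPoly r q.1 q.2.2).Splits} := by
  simp only [(monic_assocPoly _ _).splits_iff_abs_im_pow_le_norm_eval, natDegree_assocPoly,
    Set.ofPred_forall]
  refine isClosed_iInter fun z => isClosed_le continuous_const (continuous_norm.comp ?_)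
  simp only [assocPoly, Polynomial.map_sub, Polynomial.map_add, Polynomial.map_sum,
    Polynomial.map_mul, Polynomial.map_pow, map_X, map_C, eval_sub, eval_add, eval_finsetSum,
    eval_mul, eval_pow, eval_X, eval_C]
  refine .sub (continuous_const.add (continuous_finsetSum _ fun k _ => .mul ?_ continuous_const))
    (by fun_prop)
  by_cases h : r + k < 2 * r - 1
  · simp only [dif_pos h]; fun_prop
  · simp only [dif_neg h]; fun_prop

end sigmaR

section coeffPoint

variable {r : ℕ}

/-- Inverse of `(t, z) ↦ assocPoly r t z` on `{z₁ = t₁ = ⋯ = t_r = 0}`, for monic `Q` of degree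
`r + 1` without `X ^ r` term. -/
def coeffPoint (r : ℕ) (Q : ℝ[X]) : (Fin (2 * r - 1) → ℝ) × ℝ × ℝ :=
  (fun j => if r ≤ (j : ℕ) then Q.coeff (j - r + 1) else 0, 0, -Q.coeff 0)

theorem coeffPoint_assocPoly {t : Fin (2 * r - 1) → ℝ}
    (ht : ∀ k : Fin (2 * r - 1), (k : ℕ) < r → t k = 0) (z : ℝ) :
    coeffPoint r (assocPoly r t z) = (t, 0, z) := by
  refine Prod.ext (funext fun j => ?_)
    (Prod.ext rfl (neg_eq_iff_eq_neg.2 (coeff_assocPoly_zero t z)))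
  dsimp only [coeffPoint]
  split_ifs with hj
  · rw [coeff_assocPoly_succ t z (by omega)]
    exact congrArg t (Fin.ext (by simp; omega))
  · exact (ht j (by omega)).symm

theorem assocPoly_coeffPoint (hr : 1 ≤ r) {Q : ℝ[X]} (hQ : Q.Monic) (hdeg : Q.natDegree = r + 1)
    (hQr : Q.coeff r = 0) : assocPoly r (coeffPoint r Q).1 (coeffPoint r Q).2.2 = Q := by
  refine Polynomial.funext fun x => ?_
  obtain ⟨m, rfl⟩ : ∃ m, r = m + 1 := ⟨r - 1, by omega⟩
  have hlead : Q.coeff (m + 2) = 1 := by simpa [hdeg] using hQ.coeff_natDegree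
  rw [eval_assocPoly, eval_eq_sum_range, hdeg, Finset.sum_range_succ, Finset.sum_range_succ,
    Finset.sum_range_succ', hQr, hlead]
  simp only [sigmaR, coeffPoint]
  rw [Finset.sum_congr rfl fun k hk => by
    rw [dif_pos (by have := Finset.mem_range.1 hk; omega), if_pos (by omega),
      Nat.add_sub_cancel_left], Nat.add_sub_cancel]
  ring

theorem coeffPoint_prod_mem_tuplePoints (hr : 1 ≤ r) {w : Fin (r + 1) → ℝ}
    (hw : Function.Injective w) (hsum : ∑ i, w i = 0) :
    coeffPoint r (∏ i, (X - C (w i))) ∈ tuplePoints r := by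
  set Q := ∏ i, (X - C (w i))
  have hQ : Q.Monic := monic_prod_of_monic _ _ fun i _ => monic_X_sub_C (w i)
  have hdeg : Q.natDegree = r + 1 := by
    simp [Q, natDegree_prod_of_monic _ _ fun i _ => monic_X_sub_C (w i)]
  have hQr : Q.coeff r = 0 := by
    simpa [hsum] using prod_X_sub_C_coeff_card_pred Finset.univ w (by simp)
  have hvan : ∀ k : Fin (2 * r - 1), (k : ℕ) < r → (coeffPoint r Q).1 k = 0 :=
    fun k hk => if_neg (by omega)
  have hfiber :
      sigmaR r ⁻¹' {coeffPoint r Q} = Set.range fun i => ((coeffPoint r Q).1, w i) := by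
    ext ⟨u, x⟩
    change sigmaR r (u, x) = ((coeffPoint r Q).1, 0, (coeffPoint r Q).2.2) ↔ _
    rw [sigmaR_eq_iff hvan, assocPoly_coeffPoint hr hQ hdeg hQr, IsRoot, eval_prod,
      Finset.prod_eq_zero_iff]
    simp [sub_eq_zero, eq_comm, and_comm]
  change (sigmaR r ⁻¹' {coeffPoint r Q}).ncard = r + 1
  rw [hfiber, Set.ncard_range_of_injective, Nat.card_eq_fintype_card, Fintype.card_fin]
  exact fun i j h => hw (congrArg Prod.snd h)

theorem continuous_coeffPoint {α : Type*} [TopologicalSpace α] {Q : α → ℝ[X]}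
    (hQ : ∀ k, Continuous fun x => (Q x).coeff k) : Continuous fun x => coeffPoint r (Q x) := by
  refine .prodMk (continuous_pi fun j => ?_) (continuous_const.prodMk (hQ 0).neg)
  by_cases hj : r ≤ (j : ℕ)
  · simpa only [if_pos hj] using hQ _
  · simpa only [if_neg hj] using continuous_const

end coeffPoint

theorem splits_of_mem_closure_tuplePoints {r : ℕ} {q : (Fin (2 * r - 1) → ℝ) × ℝ × ℝ}
    (hq : q ∈ closure (tuplePoints r)) : (assocPoly r q.1 q.2.2).Splits :=
  closure_minimal (fun _ => splits_of_mem_tuplePoints) isClosed_setOf_splits_assocPoly hq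

open Topology in
theorem mem_closure_tuplePoints_of_splits {r : ℕ} (hr : 1 ≤ r) {t : Fin (2 * r - 1) → ℝ}
    (ht : ∀ k : Fin (2 * r - 1), (k : ℕ) < r → t k = 0) {z : ℝ}
    (hs : (assocPoly r t z).Splits) : (t, 0, z) ∈ closure (tuplePoints r) := by
  obtain ⟨v, hv, hvP⟩ :=
    exists_monotone_prod_X_sub_C_eq (monic_assocPoly t z) hs (natDegree_assocPoly t z)
  have hvsum : ∑ i, v i = 0 := by
    simpa [hvP, coeff_assocPoly_self hr] using
      prod_X_sub_C_coeff_card_pred Finset.univ v (by simp)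
  obtain ⟨d, hd, hdsum⟩ := exists_strictMono_sum_eq_zero r
  set γ : ℝ → (Fin (2 * r - 1) → ℝ) × ℝ × ℝ :=
    fun ε => coeffPoint r (∏ i, (X - C (v i + ε * d i)))
  have hγ : Continuous γ := continuous_coeffPoint <|
    continuous_coeff_prod _ fun i _ => continuous_coeff_X_sub_C (by fun_prop)
  have hγ0 : γ 0 = (t, 0, z) := by simp [γ, hvP, coeffPoint_assocPoly ht]
  refine mem_closure_of_tendsto (b := 𝓝[>] 0)
    (hγ0 ▸ hγ.continuousAt.tendsto.mono_left nhdsWithin_le_nhds) ?_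
  filter_upwards [self_mem_nhdsWithin] with ε hε
  refine coeffPoint_prod_mem_tuplePoints hr (hv.add_strictMono (hd.const_mul hε)).injective ?_
  rw [Finset.sum_add_distrib, ← Finset.mul_sum, hvsum, hdsum, mul_zero, add_zero]

/-- A point `(t, 0, z₂)` of the subspace `{z₁ = t₁ = ⋯ = t_r = 0}` lies in the
closure of the set of `(r+1)`-tuple points of `σ_r` if and only if all roots of
the associated monic polynomial `P` are real. -/
theorem closure_tuplePoints_iff_splits (r : ℕ) (hr : 1 ≤ r)
    (t : Fin (2 * r - 1) → ℝ) (ht : ∀ k : Fin (2 * r - 1), (k : ℕ) < r → t k = 0)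
    (z₂ : ℝ) :
    (t, (0 : ℝ), z₂) ∈ closure (tuplePoints r) ↔
      ((assocPoly r t z₂).map (RingHom.id ℝ)).Splits := by
  rw [Polynomial.map_id]
  exact ⟨splits_of_mem_closure_tuplePoints, mem_closure_tuplePoints_of_splits hr ht⟩
end
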